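/- Let q > 1 and 0 < u < 1 be real numbers, and let i ≥ j ≥ 0 be integers. With (1/q)_m = ∏_{r=1}^m (1 − q^{−r}) and (u/q)_m = ∏_{r=1}^m (1 − u·q^{−r}), one has ∑_{k=j}^{i} u^k / (q^{k²} (1/q)_{i−k} (1/q)_{k−j} (u/q)_{k+j}) = (u^j/q^{j²}) / ((1/q)_{i−j} (u/q)_{i+j}). (Equivalently: the columns of the matrix A = (1/((1/q)_{i−j}(u/q)_{i+j})) are right eigenvectors of the matrix M = (u^j/(q^{j²}(1/q)_{i−j})), the j-th column having eigenvalue u^j/q^{j²}.) -/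

import Mathlib

/-- `(x)_m = ∏_{r=1}^m (1 − x·q^{−r})`. -/
noncomputable def qPoch (q x : ℝ) (m : ℕ) : ℝ := ∏ r ∈ Finset.range m, (1 - x * q⁻¹ ^ (r + 1))

lemma qPoch_zero (q x : ℝ) : qPoch q x 0 = 1 := by simp [qPoch]

lemma qPoch_succ (q x : ℝ) (m : ℕ) :
    qPoch q x (m + 1) = qPoch q x m * (1 - x * q⁻¹ ^ (m + 1)) := by
  simp [qPoch, Finset.prod_range_succ]

lemma qPoch_add (q x : ℝ) (a b : ℕ) :
    qPoch q x (a + b) = qPoch q x a * qPoch q (x * q⁻¹ ^ a) b := by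
  rw [qPoch, qPoch, qPoch, Finset.prod_range_add]
  congr 1
  apply Finset.prod_congr rfl
  intro r _
  rw [pow_add]
  ring

lemma qPoch_one (q x : ℝ) : qPoch q x 1 = 1 - x * q⁻¹ := by
  simp [qPoch]

lemma qPoch_pos (q x : ℝ) (hq : 1 < q) (hx0 : 0 ≤ x) (hx1 : x ≤ 1) (m : ℕ) :
    0 < qPoch q x m := by
  apply Finset.prod_pos
  intro r _
  have hq0 : (0:ℝ) < q⁻¹ := inv_pos.2 (lt_trans one_pos hq)
  have h1 : q⁻¹ < 1 := inv_lt_one_of_one_lt₀ hq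
  have h2 : q⁻¹ ^ (r + 1) < 1 := pow_lt_one₀ (le_of_lt hq0) h1 (Nat.succ_ne_zero r)
  nlinarith [pow_pos hq0 (r + 1)]

lemma qPoch_ne (q x : ℝ) (hq : 1 < q) (hx0 : 0 ≤ x) (hx1 : x ≤ 1) (m : ℕ) :
    qPoch q x m ≠ 0 := ne_of_gt (qPoch_pos q x hq hx0 hx1 m)

section helpers

variable (q w : ℝ) (hq : 1 < q) (hw0 : 0 < w) (hw1 : w < 1)

include hq hw0 hw1 in
lemma aterm (n m : ℕ) (hm : m ≤ n) :
    (1 - q⁻¹ ^ (n + 1 - m)) *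
      (w ^ m / (q ^ (m ^ 2) * qPoch q 1 (n + 1 - m) * qPoch q 1 m * qPoch q w m)) =
    w ^ m / (q ^ (m ^ 2) * qPoch q 1 (n - m) * qPoch q 1 m * qPoch q w m) := by
  have hq0 : (0:ℝ) < q := lt_trans one_pos hq
  have hqne : q ≠ 0 := ne_of_gt hq0
  have h1 : n + 1 - m = (n - m) + 1 := by omega
  rw [h1, qPoch_succ]
  have hf : (1:ℝ) - 1 * q⁻¹ ^ (n - m + 1) ≠ 0 := by
    have h2 : q⁻¹ ^ (n - m + 1) < 1 :=
      pow_lt_one₀ (le_of_lt (inv_pos.2 hq0)) (inv_lt_one_of_one_lt₀ hq) (Nat.succ_ne_zero _)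
    intro h; nlinarith
  rw [one_mul] at hf
  rw [one_mul, show q ^ (m ^ 2) * (qPoch q 1 (n - m) * (1 - q⁻¹ ^ (n - m + 1))) *
        qPoch q 1 m * qPoch q w m =
      q ^ (m ^ 2) * qPoch q 1 (n - m) * qPoch q 1 m * qPoch q w m * (1 - q⁻¹ ^ (n - m + 1))
      from by ring,
    ← div_div, mul_comm, div_mul_cancel₀ _ hf]

include hq hw0 hw1 in
set_option maxHeartbeats 1000000 in
lemma bterm (n l : ℕ) (hl : l ≤ n) :
    q⁻¹ ^ (n + 1 - (l + 1)) * (1 - q⁻¹ ^ (l + 1)) *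
      (w ^ (l + 1) /
        (q ^ ((l + 1) ^ 2) * qPoch q 1 (n + 1 - (l + 1)) * qPoch q 1 (l + 1) *
          qPoch q w (l + 1))) =
    w * q⁻¹ ^ (n + 1) * (1 - w * q⁻¹)⁻¹ *
      ((w * q⁻¹) ^ l /
        (q ^ (l ^ 2) * qPoch q 1 (n - l) * qPoch q 1 l * qPoch q (w * q⁻¹) l)) := by
  have hq0 : (0:ℝ) < q := lt_trans one_pos hq
  have hqne : q ≠ 0 := ne_of_gt hq0
  have hqi0 : (0:ℝ) < q⁻¹ := inv_pos.2 hq0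
  have hqi1 : q⁻¹ < 1 := inv_lt_one_of_one_lt₀ hq
  have h1 : n + 1 - (l + 1) = n - l := by omega
  have hW1 : qPoch q w (l + 1) = (1 - w * q⁻¹) * qPoch q (w * q⁻¹) l := by
    rw [show l + 1 = 1 + l by omega, qPoch_add, qPoch_one, pow_one]
  rw [h1, hW1, qPoch_succ q 1 l]
  have e1 : q⁻¹ ^ (n + 1) = q⁻¹ ^ (n - l) * q⁻¹ ^ (l + 1) := by
    rw [← pow_add]; congr 1; omega
  rw [e1]
  have hwq0 : 0 ≤ w * q⁻¹ := le_of_lt (mul_pos hw0 hqi0)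
  have hwq1 : w * q⁻¹ ≤ 1 := by nlinarith
  have hP1 : qPoch q 1 (n - l) ≠ 0 := qPoch_ne q 1 hq zero_le_one le_rfl _
  have hP2 : qPoch q 1 l ≠ 0 := qPoch_ne q 1 hq zero_le_one le_rfl _
  have hW' : qPoch q (w * q⁻¹) l ≠ 0 := qPoch_ne q (w * q⁻¹) hq hwq0 hwq1 _
  have hf1 : (1:ℝ) - 1 * q⁻¹ ^ (l + 1) ≠ 0 := by
    have h2 : q⁻¹ ^ (l + 1) < 1 := pow_lt_one₀ (le_of_lt hqi0) hqi1 (Nat.succ_ne_zero _)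
    intro h; nlinarith
  have hf2 : (1:ℝ) - w * q⁻¹ ≠ 0 := by nlinarith
  rw [one_mul] at hf1
  rw [one_mul, show q ^ ((l + 1) ^ 2) * qPoch q 1 (n - l) *
        (qPoch q 1 l * (1 - q⁻¹ ^ (l + 1))) * ((1 - w * q⁻¹) * qPoch q (w * q⁻¹) l) =
      q ^ ((l + 1) ^ 2) * qPoch q 1 (n - l) * qPoch q 1 l * ((1 - w * q⁻¹) *
        qPoch q (w * q⁻¹) l) * (1 - q⁻¹ ^ (l + 1)) from by ring,
    ← div_div]
  have hcancel : ∀ y : ℝ, (1 - q⁻¹ ^ (l + 1)) * (y / (1 - q⁻¹ ^ (l + 1))) = y := by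
    intro y; rw [mul_comm, div_mul_cancel₀ _ hf1]
  rw [show q⁻¹ ^ (n - l) * (1 - q⁻¹ ^ (l + 1)) *
        (w ^ (l + 1) / (q ^ ((l + 1) ^ 2) * qPoch q 1 (n - l) * qPoch q 1 l *
          ((1 - w * q⁻¹) * qPoch q (w * q⁻¹) l)) / (1 - q⁻¹ ^ (l + 1))) =
      (1 - q⁻¹ ^ (l + 1)) * ((q⁻¹ ^ (n - l) *
        (w ^ (l + 1) / (q ^ ((l + 1) ^ 2) * qPoch q 1 (n - l) * qPoch q 1 l *
          ((1 - w * q⁻¹) * qPoch q (w * q⁻¹) l)))) / (1 - q⁻¹ ^ (l + 1))) from by ring,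
    hcancel]
  rw [show (l + 1) ^ 2 = l ^ 2 + (2 * l + 1) from by ring, pow_add]
  have hql : (0:ℝ) < q ^ (2 * l + 1) := pow_pos hq0 _
  field_simp
  have hc1 : q * q⁻¹ = 1 := mul_inv_cancel₀ hqne
  have hc2 : q ^ (l * 2) * q⁻¹ ^ (l * 2) = 1 := by rw [← mul_pow, mul_inv_cancel₀ hqne, one_pow]
  linear_combination
    (-(w ^ l * q ^ l ^ 2 * (-(w * qPoch q (w / q) l) + q * qPoch q (w / q) l)⁻¹) *
      (q ^ (l * 2) * q⁻¹ ^ (l * 2))) * hc1 +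
    (-(w ^ l * q ^ l ^ 2 * (-(w * qPoch q (w / q) l) + q * qPoch q (w / q) l)⁻¹)) * hc2

end helpers

lemma key (q : ℝ) (hq : 1 < q) :
    ∀ n : ℕ, ∀ w : ℝ, 0 < w → w < 1 →
      ∑ m ∈ Finset.range (n + 1),
          w ^ m / (q ^ (m ^ 2) * qPoch q 1 (n - m) * qPoch q 1 m * qPoch q w m) =
        1 / (qPoch q 1 n * qPoch q w n) := by
  have hq0 : (0:ℝ) < q := lt_trans one_pos hq
  have hqne : q ≠ 0 := ne_of_gt hq0
  have hqi0 : (0:ℝ) < q⁻¹ := inv_pos.2 hq0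
  have hqi1 : q⁻¹ < 1 := inv_lt_one_of_one_lt₀ hq
  intro n
  induction n with
  | zero => intro w _ _; simp [qPoch]
  | succ n ih =>
    intro w hw0 hw1
    have hwq0 : 0 < w * q⁻¹ := mul_pos hw0 hqi0
    have hwq1 : w * q⁻¹ < 1 := by nlinarith
    have hP : ∀ m : ℕ, qPoch q 1 m ≠ 0 := fun m => qPoch_ne q 1 hq zero_le_one le_rfl m
    have hW : ∀ m : ℕ, qPoch q w m ≠ 0 :=
      fun m => qPoch_ne q w hq (le_of_lt hw0) (le_of_lt hw1) m
    have hW' : ∀ m : ℕ, qPoch q (w * q⁻¹) m ≠ 0 :=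
      fun m => qPoch_ne q (w * q⁻¹) hq (le_of_lt hwq0) (le_of_lt hwq1) m
    have hDpos : (0:ℝ) < 1 - q⁻¹ ^ (n + 1) := by
      have h2 : q⁻¹ ^ (n + 1) < 1 := pow_lt_one₀ (le_of_lt hqi0) hqi1 (Nat.succ_ne_zero _)
      linarith
    have hD : (1:ℝ) - q⁻¹ ^ (n + 1) ≠ 0 := ne_of_gt hDpos
    have h : (1 - q⁻¹ ^ (n + 1)) *
        ∑ m ∈ Finset.range (n + 1 + 1),
          w ^ m / (q ^ (m ^ 2) * qPoch q 1 (n + 1 - m) * qPoch q 1 m * qPoch q w m) =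
        1 / (qPoch q 1 n * qPoch q w (n + 1)) := by
      rw [Finset.mul_sum]
      have hsplit : ∀ m ∈ Finset.range (n + 1 + 1),
          (1 - q⁻¹ ^ (n + 1)) *
            (w ^ m / (q ^ (m ^ 2) * qPoch q 1 (n + 1 - m) * qPoch q 1 m * qPoch q w m)) =
          (1 - q⁻¹ ^ (n + 1 - m)) *
            (w ^ m / (q ^ (m ^ 2) * qPoch q 1 (n + 1 - m) * qPoch q 1 m * qPoch q w m)) +
          q⁻¹ ^ (n + 1 - m) * (1 - q⁻¹ ^ m) *
            (w ^ m / (q ^ (m ^ 2) * qPoch q 1 (n + 1 - m) * qPoch q 1 m * qPoch q w m)) := by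
        intro m hm
        have hm' : m ≤ n + 1 := by
          have := Finset.mem_range.mp hm; omega
        have e : q⁻¹ ^ (n + 1 - m) * q⁻¹ ^ m = q⁻¹ ^ (n + 1) := by
          rw [← pow_add]; congr 1; omega
        linear_combination
          (w ^ m / (q ^ (m ^ 2) * qPoch q 1 (n + 1 - m) * qPoch q 1 m * qPoch q w m)) * e
      rw [Finset.sum_congr rfl hsplit, Finset.sum_add_distrib]
      have hA : ∑ m ∈ Finset.range (n + 1 + 1),
          (1 - q⁻¹ ^ (n + 1 - m)) *
            (w ^ m / (q ^ (m ^ 2) * qPoch q 1 (n + 1 - m) * qPoch q 1 m * qPoch q w m)) =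
          1 / (qPoch q 1 n * qPoch q w n) := by
        rw [Finset.sum_range_succ]
        have hz : (1 - q⁻¹ ^ (n + 1 - (n + 1))) *
            (w ^ (n + 1) / (q ^ ((n + 1) ^ 2) * qPoch q 1 (n + 1 - (n + 1)) *
              qPoch q 1 (n + 1) * qPoch q w (n + 1))) = 0 := by
          simp
        rw [hz, add_zero]
        rw [Finset.sum_congr rfl fun m hm =>
          aterm q w hq hw0 hw1 n m (Nat.lt_succ_iff.mp (Finset.mem_range.mp hm))]
        exact ih w hw0 hw1
      have hB : ∑ m ∈ Finset.range (n + 1 + 1),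
          q⁻¹ ^ (n + 1 - m) * (1 - q⁻¹ ^ m) *
            (w ^ m / (q ^ (m ^ 2) * qPoch q 1 (n + 1 - m) * qPoch q 1 m * qPoch q w m)) =
          w * q⁻¹ ^ (n + 1) / (qPoch q 1 n * qPoch q w (n + 1)) := by
        rw [Finset.sum_range_succ']
        have hz : q⁻¹ ^ (n + 1 - 0) * (1 - q⁻¹ ^ 0) *
            (w ^ 0 / (q ^ (0 ^ 2) * qPoch q 1 (n + 1 - 0) * qPoch q 1 0 * qPoch q w 0)) = 0 := by
          simp
        rw [hz, add_zero]
        rw [Finset.sum_congr rfl fun l hl =>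
          bterm q w hq hw0 hw1 n l (Nat.lt_succ_iff.mp (Finset.mem_range.mp hl))]
        rw [← Finset.mul_sum, ih (w * q⁻¹) hwq0 hwq1]
        have hW1 : qPoch q w (n + 1) = (1 - w * q⁻¹) * qPoch q (w * q⁻¹) n := by
          rw [show n + 1 = 1 + n by omega, qPoch_add, qPoch_one, pow_one]
        rw [hW1]
        have hf2 : (1:ℝ) - w * q⁻¹ ≠ 0 := by nlinarith
        field_simp
      rw [hA, hB]
      have hWs : qPoch q w (n + 1) = qPoch q w n * (1 - w * q⁻¹ ^ (n + 1)) := qPoch_succ q w n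
      have hfw : (1:ℝ) - w * q⁻¹ ^ (n + 1) ≠ 0 := by
        have h2 : q⁻¹ ^ (n + 1) < 1 := pow_lt_one₀ (le_of_lt hqi0) hqi1 (Nat.succ_ne_zero _)
        have h3 : (0:ℝ) < q⁻¹ ^ (n + 1) := pow_pos hqi0 _
        intro h; nlinarith
      rw [hWs]
      have hden : qPoch q 1 n * (qPoch q w n * (1 - w * q⁻¹ ^ (n + 1))) ≠ 0 :=
        mul_ne_zero (hP n) (mul_ne_zero (hW n) hfw)
      rw [eq_div_iff hden, add_mul, div_mul_cancel₀ _ hden,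
        show 1 / (qPoch q 1 n * qPoch q w n) *
            (qPoch q 1 n * (qPoch q w n * (1 - w * q⁻¹ ^ (n + 1)))) =
          qPoch q 1 n * qPoch q w n / (qPoch q 1 n * qPoch q w n) * (1 - w * q⁻¹ ^ (n + 1))
          from by ring,
        div_self (mul_ne_zero (hP n) (hW n))]
      ring
    rw [qPoch_succ q 1 n]
    have hD1 : (1:ℝ) - 1 * q⁻¹ ^ (n + 1) ≠ 0 := by rw [one_mul]; exact hD
    rw [eq_div_iff (mul_ne_zero (mul_ne_zero (hP n) hD1) (hW (n + 1)))]
    rw [eq_div_iff (mul_ne_zero (hP n) (hW (n + 1)))] at h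
    linear_combination h

set_option maxHeartbeats 1000000 in
/-- For `q > 1`, `0 < u < 1` and integers `i ≥ j ≥ 0`,
`∑_{k=j}^{i} u^k / (q^{k²} (1/q)_{i−k} (1/q)_{k−j} (u/q)_{k+j})
  = (u^j/q^{j²}) / ((1/q)_{i−j} (u/q)_{i+j})`,
i.e. the columns of `A = (1/((1/q)_{i−j}(u/q)_{i+j}))` are right eigenvectors of
`M = (u^j/(q^{j²}(1/q)_{i−j}))`, the `j`-th having eigenvalue `u^j/q^{j²}`. -/
theorem eigenvector_identity (q u : ℝ) (hq : 1 < q) (hu0 : 0 < u) (hu1 : u < 1)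
    (i j : ℕ) (hij : j ≤ i) :
    ∑ k ∈ Finset.Icc j i,
        u ^ k / (q ^ (k ^ 2) * qPoch q 1 (i - k) * qPoch q 1 (k - j) * qPoch q u (k + j)) =
      (u ^ j / q ^ (j ^ 2)) / (qPoch q 1 (i - j) * qPoch q u (i + j)) := by
  have hq0 : (0:ℝ) < q := lt_trans one_pos hq
  have hqne : q ≠ 0 := ne_of_gt hq0
  have hqi0 : (0:ℝ) < q⁻¹ := inv_pos.2 hq0
  have hqi1 : q⁻¹ < 1 := inv_lt_one_of_one_lt₀ hq
  have hpow1 : q⁻¹ ^ (2 * j) ≤ 1 := pow_le_one₀ (le_of_lt hqi0) (le_of_lt hqi1)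
  have hpow0 : (0:ℝ) < q⁻¹ ^ (2 * j) := pow_pos hqi0 _
  have hw0 : 0 < u * q⁻¹ ^ (2 * j) := mul_pos hu0 hpow0
  have hw1 : u * q⁻¹ ^ (2 * j) < 1 := by nlinarith
  rw [← Finset.Ico_add_one_right_eq_Icc, Finset.sum_Ico_eq_sum_range]
  rw [show i + 1 - j = (i - j) + 1 by omega]
  have hU : qPoch q u (2 * j) ≠ 0 := qPoch_ne q u hq (le_of_lt hu0) (le_of_lt hu1) _
  have hterm : ∀ m ∈ Finset.range ((i - j) + 1),
      u ^ (j + m) / (q ^ ((j + m) ^ 2) * qPoch q 1 (i - (j + m)) * qPoch q 1 (j + m - j) *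
        qPoch q u (j + m + j)) =
      (u ^ j / q ^ (j ^ 2) / qPoch q u (2 * j)) *
        ((u * q⁻¹ ^ (2 * j)) ^ m / (q ^ (m ^ 2) * qPoch q 1 ((i - j) - m) * qPoch q 1 m *
          qPoch q (u * q⁻¹ ^ (2 * j)) m)) := by
    intro m hm
    have hm' : m ≤ i - j := Nat.lt_succ_iff.mp (Finset.mem_range.mp hm)
    rw [show i - (j + m) = (i - j) - m by omega, show j + m - j = m by omega,
      show j + m + j = 2 * j + m by omega, qPoch_add q u (2 * j) m]
    have hP1 : qPoch q 1 ((i - j) - m) ≠ 0 := qPoch_ne q 1 hq zero_le_one le_rfl _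
    have hP2 : qPoch q 1 m ≠ 0 := qPoch_ne q 1 hq zero_le_one le_rfl _
    have hWm : qPoch q (u * q⁻¹ ^ (2 * j)) m ≠ 0 :=
      qPoch_ne q (u * q⁻¹ ^ (2 * j)) hq (le_of_lt hw0) (le_of_lt hw1) _
    rw [show (j + m) ^ 2 = j ^ 2 + (2 * j * m + m ^ 2) by ring, pow_add]
    field_simp
    have hc : q ^ (m * j * 2) * q⁻¹ ^ (m * j * 2) = 1 := by
      rw [← mul_pow, mul_inv_cancel₀ hqne, one_pow]
    linear_combination (-(u ^ m * q ^ m ^ 2 * q ^ j ^ 2 * (qPoch q (u * (1 / q) ^ (2 * j)) m)⁻¹)) * hc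
  rw [Finset.sum_congr rfl hterm, ← Finset.mul_sum, key q hq (i - j) _ hw0 hw1]
  rw [show i + j = 2 * j + (i - j) by omega, qPoch_add q u (2 * j) (i - j)]
  have hP : qPoch q 1 (i - j) ≠ 0 := qPoch_ne q 1 hq zero_le_one le_rfl _
  have hWn : qPoch q (u * q⁻¹ ^ (2 * j)) (i - j) ≠ 0 :=
    qPoch_ne q (u * q⁻¹ ^ (2 * j)) hq (le_of_lt hw0) (le_of_lt hw1) _
  field_simp
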